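/- Let E : ℝ^{1+2} → ℝ² be smooth, n solve -□n = Δ|E|², and set ñ = n + (1/4)Δ|E|². Then -□ñ = (1/2)(-□ΔE + ΔE)·E + (3/2)ΔE·(-□E + E) + (3/2)(-□∂^aE + ∂^aE)·∂_aE + (1/2)∂^aE·(-□∂_aE + ∂_aE) - Q_{aβ}(∂^β∂^aE, E) - Q_{βa}(∂^aE, ∂^βE), where a is summed over 1,2, β over 0,1,2 with Minkowski metric diag(-1,1,1), the dot is the ℝ² inner product on the E-components, and Q_{αβ}(u,v) = ∂_αu ∂_βv - ∂_βu ∂_αv componentwise. -/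

import Mathlib

/-- Partial derivative in `t` of a function `u(t, x₁, x₂)`. -/
noncomputable def pdt (u : ℝ → ℝ → ℝ → ℝ) : ℝ → ℝ → ℝ → ℝ :=
  fun t x y => deriv (fun s => u s x y) t

/-- Partial derivative in `x₁`. -/
noncomputable def pd1 (u : ℝ → ℝ → ℝ → ℝ) : ℝ → ℝ → ℝ → ℝ :=
  fun t x y => deriv (fun s => u t s y) x

/-- Partial derivative in `x₂`. -/
noncomputable def pd2 (u : ℝ → ℝ → ℝ → ℝ) : ℝ → ℝ → ℝ → ℝ :=
  fun t x y => deriv (fun s => u t x s) y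

/-- Lorentz boost `L₁ = x₁ ∂_t + t ∂_{x₁}`. -/
noncomputable def Lb1 (u : ℝ → ℝ → ℝ → ℝ) : ℝ → ℝ → ℝ → ℝ :=
  fun t x y => x * pdt u t x y + t * pd1 u t x y

/-- Lorentz boost `L₂ = x₂ ∂_t + t ∂_{x₂}`. -/
noncomputable def Lb2 (u : ℝ → ℝ → ℝ → ℝ) : ℝ → ℝ → ℝ → ℝ :=
  fun t x y => y * pdt u t x y + t * pd2 u t x y

/-- Rotation `Ω = x₁ ∂_{x₂} - x₂ ∂_{x₁}`. -/
noncomputable def rotOp (u : ℝ → ℝ → ℝ → ℝ) : ℝ → ℝ → ℝ → ℝ :=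
  fun t x y => x * pd2 u t x y - y * pd1 u t x y

/-- Coordinate derivative `∂_α`, `α ∈ {0,1,2}` (0 = time). -/
noncomputable def PD (α : Fin 3) : (ℝ → ℝ → ℝ → ℝ) → (ℝ → ℝ → ℝ → ℝ) :=
  if α = 0 then pdt else if α = 1 then pd1 else pd2

/-- Signs of the Minkowski metric `diag(-1,1,1)`, used to raise indices. -/
def eps (α : Fin 3) : ℝ := if α = 0 then -1 else 1

/-- `-□u = ∂_t²u - Δu` (with `□ = -∂_t² + Δ`). -/
noncomputable def negBox (u : ℝ → ℝ → ℝ → ℝ) : ℝ → ℝ → ℝ → ℝ :=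
  fun t x y => pdt (pdt u) t x y - pd1 (pd1 u) t x y - pd2 (pd2 u) t x y

/-- Spatial Laplacian `Δ = ∂₁² + ∂₂²`. -/
noncomputable def lapOp (u : ℝ → ℝ → ℝ → ℝ) : ℝ → ℝ → ℝ → ℝ :=
  fun t x y => pd1 (pd1 u) t x y + pd2 (pd2 u) t x y

/-- Null form `Q_{αβ}(u,v) = ∂_α u ∂_β v - ∂_β u ∂_α v`. -/
noncomputable def Qf (α β : Fin 3) (u v : ℝ → ℝ → ℝ → ℝ) : ℝ → ℝ → ℝ → ℝ :=
  fun t x y => PD α u t x y * PD β v t x y - PD β u t x y * PD α v t x y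


/- ### Auxiliary machinery: directional derivatives of functions on `ℝ×ℝ×ℝ` -/

noncomputable def Dv (v : ℝ×ℝ×ℝ) (F : ℝ×ℝ×ℝ → ℝ) : ℝ×ℝ×ℝ → ℝ := fun p => fderiv ℝ F p v
noncomputable def C3 (F : ℝ×ℝ×ℝ → ℝ) : ℝ → ℝ → ℝ → ℝ := fun t x y => F (t,x,y)
noncomputable def U3 (u : ℝ → ℝ → ℝ → ℝ) : ℝ×ℝ×ℝ → ℝ := fun p => u p.1 p.2.1 p.2.2

theorem Dv_contDiff {F : ℝ×ℝ×ℝ → ℝ} (hF : ContDiff ℝ (⊤ : ℕ∞) F) (v : ℝ×ℝ×ℝ) :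
    ContDiff ℝ (⊤ : ℕ∞) (Dv v F) :=
  (ContinuousLinearMap.apply ℝ ℝ v).contDiff.comp (hF.fderiv_right (by simp))

theorem Dv_add {F G : ℝ×ℝ×ℝ → ℝ} (hF : ContDiff ℝ (⊤ : ℕ∞) F) (hG : ContDiff ℝ (⊤ : ℕ∞) G) (v : ℝ×ℝ×ℝ) :
    Dv v (fun p => F p + G p) = fun p => Dv v F p + Dv v G p := by
  funext p
  simp only [Dv, fderiv_fun_add (hF.differentiable (by simp) p) (hG.differentiable (by simp) p),
    ContinuousLinearMap.add_apply]

theorem Dv_mul {F G : ℝ×ℝ×ℝ → ℝ} (hF : ContDiff ℝ (⊤ : ℕ∞) F) (hG : ContDiff ℝ (⊤ : ℕ∞) G) (v : ℝ×ℝ×ℝ) :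
    Dv v (fun p => F p * G p) = fun p => Dv v F p * G p + F p * Dv v G p := by
  funext p
  simp only [Dv, fderiv_fun_mul (hF.differentiable (by simp) p) (hG.differentiable (by simp) p),
    ContinuousLinearMap.add_apply, ContinuousLinearMap.smul_apply, smul_eq_mul]
  ring

theorem Dv_const_mul {F : ℝ×ℝ×ℝ → ℝ} (hF : ContDiff ℝ (⊤ : ℕ∞) F) (c : ℝ) (v : ℝ×ℝ×ℝ) :
    Dv v (fun p => c * F p) = fun p => c * Dv v F p := by
  funext p
  simp only [Dv, fderiv_const_mul (hF.differentiable (by simp) p) c,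
    ContinuousLinearMap.smul_apply, smul_eq_mul]

theorem Dv_comm {F : ℝ×ℝ×ℝ → ℝ} (hF : ContDiff ℝ (⊤ : ℕ∞) F) (v w : ℝ×ℝ×ℝ) :
    Dv v (Dv w F) = Dv w (Dv v F) := by
  funext p
  have hsym : IsSymmSndFDerivAt ℝ F p := hF.contDiffAt.isSymmSndFDerivAt (by rw [minSmoothness_of_isRCLikeNormedField]; exact WithTop.coe_le_coe.mpr (le_top : (2 : ℕ∞) ≤ ⊤))
  have key : ∀ u : ℝ×ℝ×ℝ, ∀ z : ℝ×ℝ×ℝ,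
      fderiv ℝ (fun q => fderiv ℝ F q u) z = (fderiv ℝ (fderiv ℝ F) z).flip u := by
    intro u z
    have hdF : DifferentiableAt ℝ (fderiv ℝ F) z :=
      ((hF.fderiv_right (m := (⊤ : ℕ∞)) (by simp)).differentiable (by simp)) z
    have := fderiv_clm_apply (𝕜 := ℝ) hdF (differentiableAt_const u)
    simpa using this
  show fderiv ℝ (fun q => fderiv ℝ F q w) p v = fderiv ℝ (fun q => fderiv ℝ F q v) p w
  rw [key w p, key v p]
  exact hsym v w

theorem Dv_comm10 {F : ℝ×ℝ×ℝ → ℝ} (hF : ContDiff ℝ (⊤ : ℕ∞) F) :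
    Dv (0,1,0) (Dv (1,0,0) F) = Dv (1,0,0) (Dv (0,1,0) F) := Dv_comm hF _ _
theorem Dv_comm20 {F : ℝ×ℝ×ℝ → ℝ} (hF : ContDiff ℝ (⊤ : ℕ∞) F) :
    Dv (0,0,1) (Dv (1,0,0) F) = Dv (1,0,0) (Dv (0,0,1) F) := Dv_comm hF _ _
theorem Dv_comm21 {F : ℝ×ℝ×ℝ → ℝ} (hF : ContDiff ℝ (⊤ : ℕ∞) F) :
    Dv (0,0,1) (Dv (0,1,0) F) = Dv (0,1,0) (Dv (0,0,1) F) := Dv_comm hF _ _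

theorem pdt_eq (u : ℝ → ℝ → ℝ → ℝ) (h : ContDiff ℝ (⊤ : ℕ∞) (U3 u)) :
    pdt u = C3 (Dv (1,0,0) (U3 u)) := by
  funext t x y
  have h1 : HasDerivAt (fun s : ℝ => ((s, x, y) : ℝ×ℝ×ℝ)) (1,0,0) t :=
    (hasDerivAt_id t).prodMk ((hasDerivAt_const t x).prodMk (hasDerivAt_const t y))
  exact (((h.differentiable (by simp) (t,x,y)).hasFDerivAt).comp_hasDerivAt t h1).deriv

theorem pd1_eq (u : ℝ → ℝ → ℝ → ℝ) (h : ContDiff ℝ (⊤ : ℕ∞) (U3 u)) :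
    pd1 u = C3 (Dv (0,1,0) (U3 u)) := by
  funext t x y
  have h1 : HasDerivAt (fun s : ℝ => ((t, s, y) : ℝ×ℝ×ℝ)) (0,1,0) x :=
    (hasDerivAt_const x t).prodMk ((hasDerivAt_id x).prodMk (hasDerivAt_const x y))
  exact (((h.differentiable (by simp) (t,x,y)).hasFDerivAt).comp_hasDerivAt x h1).deriv

theorem pd2_eq (u : ℝ → ℝ → ℝ → ℝ) (h : ContDiff ℝ (⊤ : ℕ∞) (U3 u)) :
    pd2 u = C3 (Dv (0,0,1) (U3 u)) := by
  funext t x y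
  have h1 : HasDerivAt (fun s : ℝ => ((t, x, s) : ℝ×ℝ×ℝ)) (0,0,1) y :=
    (hasDerivAt_const y t).prodMk ((hasDerivAt_const y x).prodMk (hasDerivAt_id y))
  exact (((h.differentiable (by simp) (t,x,y)).hasFDerivAt).comp_hasDerivAt y h1).deriv

theorem U3_C3 (F : ℝ×ℝ×ℝ → ℝ) : U3 (C3 F) = F := by funext p; rfl
theorem C3_apply (F : ℝ×ℝ×ℝ → ℝ) (t x y : ℝ) : C3 F t x y = F (t,x,y) := rfl
theorem U3_apply (u : ℝ → ℝ → ℝ → ℝ) (t x y : ℝ) : U3 u (t,x,y) = u t x y := rfl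
theorem U3_add (u v : ℝ → ℝ → ℝ → ℝ) :
    U3 (fun t x y => u t x y + v t x y) = fun p => U3 u p + U3 v p := by funext p; rfl
theorem U3_const_mul (c : ℝ) (u : ℝ → ℝ → ℝ → ℝ) :
    U3 (fun t x y => c * u t x y) = fun p => c * U3 u p := by funext p; rfl



theorem Dv_const (c : ℝ) (v : ℝ×ℝ×ℝ) : Dv v (fun _ => c) = fun _ => (0:ℝ) := by
  funext p
  simp [Dv]

theorem PD_zero : PD 0 = pdt := rfl
theorem PD_one : PD 1 = pd1 := rfl
theorem PD_two : PD 2 = pd2 := rfl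
theorem eps_zero : eps 0 = -1 := rfl
theorem eps_one : eps 1 = 1 := rfl
theorem eps_two : eps 2 = 1 := rfl
theorem lapOp_eq (u : ℝ → ℝ → ℝ → ℝ) :
    lapOp u = fun t x y => pd1 (pd1 u) t x y + pd2 (pd2 u) t x y := rfl
theorem negBox_eq (u : ℝ → ℝ → ℝ → ℝ) :
    negBox u = fun t x y => pdt (pdt u) t x y - pd1 (pd1 u) t x y - pd2 (pd2 u) t x y := rfl


theorem U3_neg (u : ℝ → ℝ → ℝ → ℝ) :
    U3 (fun t x y => -(u t x y)) = fun p => -(U3 u p) := by funext p; rfl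
theorem Dv_neg {F : ℝ×ℝ×ℝ → ℝ} (hF : ContDiff ℝ (⊤ : ℕ∞) F) (v : ℝ×ℝ×ℝ) :
    Dv v (fun p => -(F p)) = fun p => -(Dv v F p) := by
  funext p
  simp only [Dv, fderiv_fun_neg (𝕜 := ℝ), ContinuousLinearMap.neg_apply]
theorem ContDiff_neg' {F : ℝ×ℝ×ℝ → ℝ} (hF : ContDiff ℝ (⊤ : ℕ∞) F) :
    ContDiff ℝ (⊤ : ℕ∞) (fun p => -(F p)) := hF.neg

set_option maxHeartbeats 4000000 in
/-- Nonlinear transformation identity for the KGZ wave component: if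
`-□n = Δ|E|²` and `ñ = n + (1/4)Δ|E|²` (`E : ℝ^{1+2} → ℝ²`), then
`-□ñ = (1/2)(-□ΔE+ΔE)·E + (3/2)ΔE·(-□E+E) + (3/2)(-□∂^aE+∂^aE)·∂_aE
      + (1/2)∂^aE·(-□∂_aE+∂_aE) - Q_{aβ}(∂^β∂^aE,E) - Q_{βa}(∂^aE,∂^βE)`,
with `a` summed over `{1,2}`, `β` over `{0,1,2}` (Minkowski metric), componentwise dot. -/
theorem stmt12 (E : Fin 2 → ℝ → ℝ → ℝ → ℝ) (n : ℝ → ℝ → ℝ → ℝ)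
    (hE : ∀ i, ContDiff ℝ (⊤ : ℕ∞) (fun p : ℝ × ℝ × ℝ => E i p.1 p.2.1 p.2.2))
    (hn : ContDiff ℝ (⊤ : ℕ∞) (fun p : ℝ × ℝ × ℝ => n p.1 p.2.1 p.2.2))
    (heq : ∀ t x y : ℝ,
      negBox n t x y = lapOp (fun s p q => ∑ i : Fin 2, (E i s p q) ^ 2) t x y) :
    ∀ t x y : ℝ,
      negBox (fun t x y =>
          n t x y + (1 / 4) * lapOp (fun s p q => ∑ i : Fin 2, (E i s p q) ^ 2) t x y) t x y =
        (1 / 2) * (∑ i : Fin 2,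
            (negBox (lapOp (E i)) t x y + lapOp (E i) t x y) * E i t x y)
        + (3 / 2) * (∑ i : Fin 2,
            lapOp (E i) t x y * (negBox (E i) t x y + E i t x y))
        + (3 / 2) * (∑ a ∈ ({1, 2} : Finset (Fin 3)), ∑ i : Fin 2,
            (negBox (PD a (E i)) t x y + PD a (E i) t x y) * PD a (E i) t x y)
        + (1 / 2) * (∑ a ∈ ({1, 2} : Finset (Fin 3)), ∑ i : Fin 2,
            PD a (E i) t x y * (negBox (PD a (E i)) t x y + PD a (E i) t x y))
        - (∑ a ∈ ({1, 2} : Finset (Fin 3)), ∑ β : Fin 3, ∑ i : Fin 2,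
            Qf a β (fun s p q => eps β * PD β (PD a (E i)) s p q) (E i) t x y)
        - (∑ β : Fin 3, ∑ a ∈ ({1, 2} : Finset (Fin 3)), ∑ i : Fin 2,
            Qf β a (PD a (E i)) (fun s p q => eps β * PD β (E i) s p q) t x y) := by
  intro t x y
  have hE' : ∀ i, ContDiff ℝ (⊤ : ℕ∞) (U3 (E i)) := hE
  have hn' : ContDiff ℝ (⊤ : ℕ∞) (U3 n) := hn
  have hGG : U3 (fun s p q => ∑ i : Fin 2, (E i s p q)^2)
      = fun p => U3 (E 0) p * U3 (E 0) p + U3 (E 1) p * U3 (E 1) p := by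
    funext p
    simp [U3, Fin.sum_univ_two]
    ring
  have hGG2 : U3 (fun s p q => E 0 s p q ^ 2 + E 1 s p q ^ 2)
      = fun p => U3 (E 0) p * U3 (E 0) p + U3 (E 1) p * U3 (E 1) p := by
    funext p
    simp [U3]
    ring
  have heq' := heq t x y
  simp (config := { maxDischargeDepth := 40, maxSteps := 4000000 }) only
    [negBox_eq, lapOp_eq, pdt_eq, pd1_eq, pd2_eq, U3_C3, U3_add, U3_const_mul, hGG, hGG2,
     Dv_add, Dv_mul, Dv_const_mul, Dv_const, one_mul, neg_one_mul, zero_mul, mul_zero, add_zero, zero_add, neg_neg, Dv_comm10, Dv_comm20, Dv_comm21,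
     Dv_contDiff, hE', hn', ContDiff.add, ContDiff.mul, contDiff_const, U3_neg, Dv_neg, ContDiff_neg'] at heq'
  simp (config := { maxDischargeDepth := 40, maxSteps := 4000000 }) only
    [negBox_eq, lapOp_eq, Qf, PD_zero, PD_one, PD_two, eps_zero, eps_one, eps_two, Fin.sum_univ_two, Fin.sum_univ_three,
     Finset.sum_pair (show (1 : Fin 3) ≠ 2 by decide),
          pdt_eq, pd1_eq, pd2_eq, U3_C3, U3_add, U3_const_mul, hGG, hGG2,
     Dv_add, Dv_mul, Dv_const_mul, Dv_const, one_mul, neg_one_mul, zero_mul, mul_zero, add_zero, zero_add, neg_neg, Dv_comm10, Dv_comm20, Dv_comm21,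
     Dv_contDiff, hE', hn', ContDiff.add, ContDiff.mul, contDiff_const, U3_neg, Dv_neg, ContDiff_neg']
  simp only [C3_apply, U3_apply] at heq' ⊢
  linear_combination heq'
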